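/- arXiv:2512.22794 — 2 statements merged into one kernel-verified Lean document; each statement's English description precedes it below -/
import Mathlib

section
/- Pita factorisation is compatible with ordinal sum: for f : Fin m → Fin n and g : Fin m' → Fin n', let f ⊕ g : Fin (m+m') → Fin (n+n') denote the ordinal sum (block sum) of f and g. Then η(f ⊕ g) = η(f) ⊕ η(g) and π(f ⊕ g) = π(f) ⊕ π(g). -/
/-!
π(h) is the bijection that sorts `Fin m` by the lexicographic key `(h i, i)`, and then
`η(h) = h ∘ π(h)⁻¹`; hence pita factorisations are unique. Since `f ⊕ g` keeps the two blocks
apart and in order, the blockwise sums `π(f) ⊕ π(g)` and `η(f) ⊕ η(g)` form a pita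
factorisation of `f ⊕ g`, so they are the one.
-/

def IsPita {m n : ℕ} (f : Fin m → Fin n) (p : Fin m → Fin m) (e : Fin m → Fin n) : Prop :=
  Monotone e ∧ Function.Bijective p ∧
    (∀ i j : Fin m, f i = f j → i ≤ j → p i ≤ p j) ∧ e ∘ p = f

/-- The ordinal (block) sum of two maps of finite ordinals. -/
def osum {m n m' n' : ℕ} (f : Fin m → Fin n) (g : Fin m' → Fin n') :
    Fin (m + m') → Fin (n + n') :=
  fun x => finSumFinEquiv (Sum.map f g (finSumFinEquiv.symm x))

theorem Function.Bijective.eq_of_lt_imp_lt {α β : Type*} [LinearOrder β] [WellFoundedLT β]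
    {p q : α → β} (hp : p.Bijective) (hq : q.Surjective) (h : ∀ i j, p i < p j → q i < q j) :
    p = q := by
  let P := Equiv.ofBijective p hp
  have hmono : StrictMono (q ∘ P.symm) := fun x y hxy =>
    h _ _ (by simpa only [P, Equiv.ofBijective_apply_symm_apply] using hxy)
  have hid : ∀ x, q (P.symm x) = x := fun x =>
    congrArg (· x) (Subsingleton.elim (hmono.orderIsoOfSurjective _ (hq.comp P.symm.surjective))
      (OrderIso.refl β))
  funext i
  simpa only [P, Equiv.ofBijective_symm_apply_apply] using (hid (p i)).symm

namespace IsPita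

variable {m n : ℕ} {f : Fin m → Fin n} {p p' : Fin m → Fin m} {e e' : Fin m → Fin n}

theorem lt_of_toLex_lt (h : IsPita f p e) {i j : Fin m}
    (hij : toLex (f i, i) < toLex (f j, j)) : p i < p j := by
  obtain ⟨he, hp, hfib, rfl⟩ := h
  rcases Prod.Lex.toLex_lt_toLex.1 hij with hlt | ⟨heq, hlt⟩
  · exact lt_of_not_ge fun hji => (he hji).not_gt hlt
  · exact (hfib i j heq hlt.le).lt_of_ne (hp.1.ne hlt.ne)

theorem lt_iff_toLex_lt (h : IsPita f p e) (i j : Fin m) :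
    p i < p j ↔ toLex (f i, i) < toLex (f j, j) := by
  refine ⟨fun hp => lt_of_not_ge fun hji => ?_, h.lt_of_toLex_lt⟩
  rcases hji.eq_or_lt with heq | hlt
  · rw [toLex_inj, Prod.mk.injEq] at heq
    exact hp.ne (congrArg p heq.2.symm)
  · exact hp.not_gt (h.lt_of_toLex_lt hlt)

theorem unique (h : IsPita f p e) (h' : IsPita f p' e') : e = e' ∧ p = p' := by
  obtain rfl : p = p' := h.2.1.eq_of_lt_imp_lt h'.2.1.2 fun i j hij =>
    (h'.lt_iff_toLex_lt i j).2 ((h.lt_iff_toLex_lt i j).1 hij)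
  exact ⟨h.2.1.2.injective_comp_right (h.2.2.2.trans h'.2.2.2.symm), rfl⟩

end IsPita

section osum

variable {m n m' n' k k' : ℕ}

theorem Fin.castAdd_lt_natAdd (i : Fin m) (j : Fin m') : Fin.castAdd m' i < Fin.natAdd m j :=
  Fin.lt_def.2 (by simp only [Fin.val_castAdd, Fin.val_natAdd]; omega)

@[simp]
theorem osum_castAdd (f : Fin m → Fin n) (g : Fin m' → Fin n') (i : Fin m) :
    osum f g (Fin.castAdd m' i) = Fin.castAdd n' (f i) := by
  simp [osum]

@[simp]
theorem osum_natAdd (f : Fin m → Fin n) (g : Fin m' → Fin n') (j : Fin m') :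
    osum f g (Fin.natAdd m j) = Fin.natAdd n (g j) := by
  simp [osum]

theorem osum_comp_osum (f : Fin n → Fin k) (g : Fin n' → Fin k') (p : Fin m → Fin n)
    (q : Fin m' → Fin n') : osum f g ∘ osum p q = osum (f ∘ p) (g ∘ q) := by
  funext x
  simp only [osum, Function.comp_apply, Equiv.symm_apply_apply, Sum.map_map]

theorem Function.Bijective.osum {p : Fin m → Fin m} {q : Fin m' → Fin m'} (hp : p.Bijective)
    (hq : q.Bijective) : (osum p q).Bijective :=
  finSumFinEquiv.bijective.comp ((hp.sumMap hq).comp finSumFinEquiv.symm.bijective)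

theorem Monotone.osum {f : Fin m → Fin n} {g : Fin m' → Fin n'} (hf : Monotone f)
    (hg : Monotone g) : Monotone (osum f g) := by
  intro x y hxy
  cases x using Fin.addCases <;> cases y using Fin.addCases
  · simp only [osum_castAdd, (Fin.strictMono_castAdd _).le_iff_le] at hxy ⊢
    exact hf hxy
  · simpa only [osum_castAdd, osum_natAdd] using (Fin.castAdd_lt_natAdd _ _).le
  · exact absurd hxy (Fin.castAdd_lt_natAdd _ _).not_ge
  · simp only [osum_natAdd, Fin.natAdd_le_natAdd_iff] at hxy ⊢
    exact hg hxy

theorem osum_le_osum_of_osum_eq {f : Fin m → Fin n} {g : Fin m' → Fin n'} {p : Fin m → Fin k}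
    {q : Fin m' → Fin k'} (hf : ∀ i j, f i = f j → i ≤ j → p i ≤ p j)
    (hg : ∀ i j, g i = g j → i ≤ j → q i ≤ q j) (x y : Fin (m + m'))
    (hxy : osum f g x = osum f g y) (hle : x ≤ y) : osum p q x ≤ osum p q y := by
  cases x using Fin.addCases <;> cases y using Fin.addCases
  · simp only [osum_castAdd, Fin.castAdd_inj, (Fin.strictMono_castAdd _).le_iff_le] at hxy hle ⊢
    exact hf _ _ hxy hle
  · simpa only [osum_castAdd, osum_natAdd] using (Fin.castAdd_lt_natAdd _ _).le
  · exact absurd hle (Fin.castAdd_lt_natAdd _ _).not_ge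
  · simp only [osum_natAdd, Fin.natAdd_inj, Fin.natAdd_le_natAdd_iff] at hxy hle ⊢
    exact hg _ _ hxy hle

theorem IsPita.osum {f : Fin m → Fin n} {g : Fin m' → Fin n'} {pf : Fin m → Fin m}
    {ef : Fin m → Fin n} {pg : Fin m' → Fin m'} {eg : Fin m' → Fin n'} (hf : IsPita f pf ef)
    (hg : IsPita g pg eg) : IsPita (osum f g) (osum pf pg) (osum ef eg) :=
  ⟨hf.1.osum hg.1, hf.2.1.osum hg.2.1, osum_le_osum_of_osum_eq hf.2.2.1 hg.2.2.1,
    by rw [osum_comp_osum, hf.2.2.2, hg.2.2.2]⟩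

end osum

/-- Pita factorisation is compatible with ordinal sum:
`η(f ⊕ g) = η(f) ⊕ η(g)` and `π(f ⊕ g) = π(f) ⊕ π(g)`. -/
theorem pita_osum {m n m' n' : ℕ}
    (f : Fin m → Fin n) (g : Fin m' → Fin n')
    (pf : Fin m → Fin m) (ef : Fin m → Fin n) (hf : IsPita f pf ef)
    (pg : Fin m' → Fin m') (eg : Fin m' → Fin n') (hg : IsPita g pg eg)
    (ps : Fin (m + m') → Fin (m + m')) (es : Fin (m + m') → Fin (n + n'))
    (hs : IsPita (osum f g) ps es) :
    es = osum ef eg ∧ ps = osum pf pg :=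
  hs.unique (hf.osum hg)
end

section
/- For g : Fin m → Fin p and f : Fin p → Fin n, one has η(f ∘ g) = η(f) ∘ η( π(f) ∘ η(g) ), i.e. the monotone part of a composite equals the monotone part of f composed with the monotone part of π(f) ∘ η(g). -/
open Function

theorem Monotone.eq_of_comp_eq_comp_of_bijective {α : Type*} [PartialOrder α] {m : ℕ}
    {e₁ e₂ : Fin m → α} {p₁ p₂ : Fin m → Fin m} (he₁ : Monotone e₁) (he₂ : Monotone e₂)
    (hp₁ : Bijective p₁) (hp₂ : Bijective p₂) (h : e₁ ∘ p₁ = e₂ ∘ p₂) : e₁ = e₂ := by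
  set σ := Equiv.ofBijective p₁ hp₁
  set τ := Equiv.ofBijective p₂ hp₂
  have hσ : (e₁ ∘ p₁) ∘ σ.symm = e₁ := by
    ext i; simp [σ, Equiv.ofBijective_apply_symm_apply]
  have hτ : (e₁ ∘ p₁) ∘ τ.symm = e₂ := by
    rw [h]; ext i; simp [τ, Equiv.ofBijective_apply_symm_apply]
  calc e₁ = (e₁ ∘ p₁) ∘ σ.symm := hσ.symm
    _ = (e₁ ∘ p₁) ∘ τ.symm := Tuple.unique_monotone (by rwa [hσ]) (by rwa [hτ])
    _ = e₂ := hτ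

namespace IsPita

variable {m n : ℕ} {h : Fin m → Fin n} {p : Fin m → Fin m} {e : Fin m → Fin n}

theorem monotone (hpe : IsPita h p e) : Monotone e := hpe.1

theorem bijective (hpe : IsPita h p e) : Bijective p := hpe.2.1

theorem comp_eq (hpe : IsPita h p e) : e ∘ p = h := hpe.2.2.2

theorem eq_of_comp_eq {p' : Fin m → Fin m} {e' : Fin m → Fin n} (hpe : IsPita h p e)
    (he' : Monotone e') (hp' : Bijective p') (h' : e' ∘ p' = h) : e = e' :=
  hpe.monotone.eq_of_comp_eq_comp_of_bijective he' hpe.bijective hp' (hpe.comp_eq.trans h'.symm)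

end IsPita

/-- The valid half of the Warning after Proposition 5.5:
`η(f ∘ g) = η(f) ∘ η(π(f) ∘ η(g))`. -/
theorem eta_comp {m p n : ℕ}
    (g : Fin m → Fin p) (f : Fin p → Fin n)
    (pg : Fin m → Fin m) (eg : Fin m → Fin p) (hg : IsPita g pg eg)
    (pf : Fin p → Fin p) (ef : Fin p → Fin n) (hf : IsPita f pf ef)
    (pc : Fin m → Fin m) (ec : Fin m → Fin n) (hc : IsPita (f ∘ g) pc ec)
    (pm : Fin m → Fin m) (em : Fin m → Fin p) (hm : IsPita (pf ∘ eg) pm em) :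
    ec = ef ∘ em := by
  refine hc.eq_of_comp_eq (p' := pm ∘ pg) (hf.monotone.comp hm.monotone)
    (hm.bijective.comp hg.bijective) ?_
  calc (ef ∘ em) ∘ (pm ∘ pg) = ef ∘ (em ∘ pm) ∘ pg := rfl
    _ = (ef ∘ pf) ∘ (eg ∘ pg) := by rw [hm.comp_eq]; rfl
    _ = f ∘ g := by rw [hf.comp_eq, hg.comp_eq]
end
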